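/- arXiv:cs/0607131 — 2 statements merged into one kernel-verified Lean document; each statement's English description precedes it below -/
import Mathlib

section
/- In the code-generation model with a coalition C of size c ≥ 2 using any admissible strategy, for every α > 0: E[exp(−α·S)] ≤ (E_{0,0} + E_{1,c} + Σ_{x=1}^{c−1} C(c,x)·max(E_{0,x}, E_{1,x}))^m, where for integers 0 ≤ x ≤ c one defines E_{0,x} = ∫_t^{1−t} f(p)·p^x·(1−p)^{c−x} dp and E_{1,x} = ∫_t^{1−t} f(p)·p^x·(1−p)^{c−x}·exp(α·g1(p)·(cp−x)/(1−p)) dp. -/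
open MeasureTheory ProbabilityTheory Real
open scoped ENNReal NNReal

noncomputable section

/-- Bernoulli measure on `Bool` with parameter `p`. -/
def bern (p : ℝ) : Measure Bool :=
  ENNReal.ofReal p • Measure.dirac true + ENNReal.ofReal (1 - p) • Measure.dirac false

/-- The measure on `ℝ` with density `f` (w.r.t. Lebesgue measure). -/
def biasMeasure (f : ℝ → ℝ) : Measure ℝ :=
  MeasureTheory.volume.withDensity fun p => ENNReal.ofReal (f p)

/-- Joint law of the biases `p = (p_1,…,p_m)` (i.i.d. with density `f`) together with the
code matrix `X` whose entries `X j i` are, conditionally on `p`, independent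
Bernoulli(`p i`). -/
def codeMeasure (n m : ℕ) (f : ℝ → ℝ) :
    Measure ((Fin m → ℝ) × (Fin n → Fin m → Bool)) :=
  (Measure.pi fun _ : Fin m => biasMeasure f).bind fun p =>
    (Measure.dirac p).prod (Measure.pi fun _ : Fin n => Measure.pi fun i : Fin m => bern (p i))

/-- The accusation sum `S_j = Σ_i y_i · (g1 (p_i) if X_{ji} = 1, g0 (p_i) if X_{ji} = 0)`. -/
def accusation (m : ℕ) (g1 g0 : ℝ → ℝ) (p : Fin m → ℝ) (x : Fin m → Bool)
    (y : Fin m → Bool) : ℝ :=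
  ∑ i, if y i then (if x i then g1 (p i) else g0 (p i)) else 0

/-- `E_{0,x} = ∫_t^{1-t} f p · p^x · (1-p)^{c-x} dp`. -/
def E₀ (t : ℝ) (f : ℝ → ℝ) (c x : ℕ) : ℝ :=
  ∫ p in Set.Icc t (1-t), f p * p ^ x * (1-p) ^ (c - x)

/-- `E_{1,x} = ∫_t^{1-t} f p · p^x · (1-p)^{c-x} · exp (α·g1 p·(cp - x)/(1-p)) dp`. -/
def E₁ (t : ℝ) (f g1 : ℝ → ℝ) (α : ℝ) (c x : ℕ) : ℝ :=
  ∫ p in Set.Icc t (1-t),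
    f p * p ^ x * (1-p) ^ (c - x) * Real.exp (α * g1 p * ((c:ℝ) * p - (x:ℝ)) / (1-p))

/-!
Fix the coalition's private randomness `r`. The strategy is then a function of the coalition's
rows `W` alone, so the other rows of the code matrix sum out. For fixed `W` the output `y` is fixed
and `exp (-α S)` is a product over the columns `i` of factors depending only on `p i` and on column
`i` of `W`; as the `p i` are independent, the expectation is the product of the column integrals.
If column `i` has `x` ones, then since `g0 p = -p g1 p / (1 - p)` the coalition's score on it is
`-g1 p (c p - x) / (1 - p)` when `y i = 1`, so the column integral is `E_{1,x}`, and it is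
`E_{0,x}` when `y i = 0`. The marking condition fixes `y i = 0` when `x = 0` and `y i = 1` when
`x = c`; otherwise the maximum bounds it. Summing these column bounds over all `W` factorises as
the `m`-th power of `∑ₓ C(c,x)·bound x`.
-/

open Finset

def bernMass (p : ℝ) (b : Bool) : ℝ≥0∞ := ENNReal.ofReal (bif b then p else 1 - p)

@[fun_prop]
lemma measurable_bernMass (b : Bool) : Measurable (bernMass · b) := by
  cases b <;> simp only [bernMass, cond_true, cond_false] <;> fun_prop

lemma bern_singleton (p : ℝ) (b : Bool) : bern p {b} = bernMass p b := by
  cases b <;> simp [bern, bernMass]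

instance (p : ℝ) : IsFiniteMeasure (bern p) := by
  constructor
  simp [bern]

lemma bernMass_true_add_false {p : ℝ} (hp : p ∈ Set.Icc 0 1) :
    bernMass p true + bernMass p false = 1 := by
  simp only [bernMass, cond_true, cond_false]
  rw [← ENNReal.ofReal_add hp.1 (sub_nonneg.2 hp.2), add_sub_cancel, ENNReal.ofReal_one]

lemma sum_pi_prod_eq_one {ι β R : Type*} [Fintype ι] [DecidableEq ι] [Fintype β]
    [CommSemiring R] {w : ι → β → R} (hw : ∀ i, ∑ b, w i b = 1) :
    ∑ x : ι → β, ∏ i, w i (x i) = 1 := by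
  rw [← Fintype.prod_sum]
  exact prod_eq_one fun i _ => hw i

lemma sum_prod_bernMass {ι : Type*} [Fintype ι] [DecidableEq ι] {p : ι → ℝ}
    (hp : ∀ i, p i ∈ Set.Icc 0 1) : ∑ v : ι → Bool, ∏ i, bernMass (p i) (v i) = 1 :=
  sum_pi_prod_eq_one fun i => by rw [Fintype.sum_bool, bernMass_true_add_false (hp i)]

lemma prod_bernMass {κ : Type*} [Fintype κ] {q : ℝ} (hq : q ∈ Set.Icc 0 1) (v : κ → Bool) :
    ∏ j, bernMass q (v j)
      = ENNReal.ofReal (q ^ #{j | v j} * (1 - q) ^ (Fintype.card κ - #{j | v j})) := by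
  have hcard : Fintype.card κ - #{j | v j} = #{j | ¬v j} := by
    rw [← card_univ, ← card_filter_add_card_filter_not (fun j => v j = true),
      Nat.add_sub_cancel_left]
  rw [ENNReal.ofReal_mul (pow_nonneg hq.1 _), ENNReal.ofReal_pow hq.1,
    ENNReal.ofReal_pow (sub_nonneg.2 hq.2), hcard, ← prod_const, ← prod_const, ← prod_ite]
  refine prod_congr rfl fun j _ => ?_
  cases v j <;> rfl

def codeMatrixMeasure (n : ℕ) {m : ℕ} (p : Fin m → ℝ) : Measure (Fin n → Fin m → Bool) :=
  Measure.pi fun _ : Fin n => Measure.pi fun i => bern (p i)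

lemma codeMatrixMeasure_singleton {n m : ℕ} (p : Fin m → ℝ) (X : Fin n → Fin m → Bool) :
    codeMatrixMeasure n p {X} = ∏ j, ∏ i, bernMass (p i) (X j i) := by
  rw [codeMatrixMeasure, ← Set.univ_pi_singleton, Measure.pi_pi]
  refine prod_congr rfl fun j _ => ?_
  rw [← Set.univ_pi_singleton, Measure.pi_pi]
  exact prod_congr rfl fun i _ => bern_singleton _ _

lemma measurable_codeKernel {n m : ℕ} :
    Measurable fun p : Fin m → ℝ => (Measure.dirac p).prod (codeMatrixMeasure n p) := by
  refine Measure.measurable_of_measurable_coe _ fun s hs => ?_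
  have hcoe : ∀ p : Fin m → ℝ, (Measure.dirac p).prod (codeMatrixMeasure n p) s
      = ∑ X, s.indicator 1 (p, X) * ∏ j, ∏ i, bernMass (p i) (X j i) := fun p => by
    rw [Measure.dirac_prod, Measure.map_apply measurable_prodMk_left hs,
      ← lintegral_indicator_one (measurable_prodMk_left hs), lintegral_fintype]
    simp only [codeMatrixMeasure_singleton]
    rfl
  simp_rw [hcoe]
  refine Finset.measurable_sum _ fun X _ => Measurable.mul ?_ ?_
  · exact (measurable_one.indicator hs).comp (measurable_id.prodMk measurable_const)
  · exact Finset.measurable_prod _ fun j _ => Finset.measurable_prod _ fun i _ =>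
      (measurable_bernMass _).comp (measurable_pi_apply i)

lemma lintegral_codeMeasure {n m : ℕ} (f : ℝ → ℝ)
    {F : (Fin m → ℝ) × (Fin n → Fin m → Bool) → ℝ≥0∞} (hF : Measurable F) :
    ∫⁻ z, F z ∂codeMeasure n m f
      = ∫⁻ p, ∑ X, (∏ j, ∏ i, bernMass (p i) (X j i)) * F (p, X)
          ∂Measure.pi fun _ => biasMeasure f := by
  change ∫⁻ z, F z ∂(Measure.pi _).bind (fun p => (Measure.dirac p).prod (codeMatrixMeasure n p))
    = _
  rw [Measure.lintegral_bind measurable_codeKernel.aemeasurable hF.aemeasurable]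
  refine lintegral_congr fun p => ?_
  rw [Measure.dirac_prod, lintegral_map hF measurable_prodMk_left, lintegral_fintype]
  simp only [← codeMatrixMeasure_singleton, mul_comm]

lemma isProbabilityMeasure_codeMeasure {n m : ℕ} {f : ℝ → ℝ}
    [IsProbabilityMeasure (biasMeasure f)] (hf : ∀ᵐ q ∂biasMeasure f, q ∈ Set.Icc 0 1) :
    IsProbabilityMeasure (codeMeasure n m f) := by
  constructor
  have hae : ∀ᵐ p ∂Measure.pi fun _ : Fin m => biasMeasure f,
      ∑ X : Fin n → Fin m → Bool, ∏ j, ∏ i, bernMass (p i) (X j i) = 1 := by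
    filter_upwards [Measure.ae_pi_le_pi (Filter.eventually_pi fun _ => hf)] with p hp
    exact sum_pi_prod_eq_one fun _ => sum_prod_bernMass hp
  rw [← lintegral_one, lintegral_codeMeasure f measurable_const]
  simp only [mul_one]
  rw [lintegral_congr_ae hae, lintegral_one, measure_univ]

lemma sum_comp_card_filter {κ M : Type*} [Fintype κ] [DecidableEq κ] [AddCommMonoid M]
    (F : ℕ → M) :
    ∑ v : κ → Bool, F #{j | v j}
      = ∑ x ∈ range (Fintype.card κ + 1), (Fintype.card κ).choose x • F x := by
  let e : (κ → Bool) ≃ Finset κ :=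
    { toFun v := {j | v j}
      invFun s j := decide (j ∈ s)
      left_inv v := by ext j; simp
      right_inv s := by ext j; simp }
  rw [Fintype.sum_equiv e (fun v => F #{j | v j}) (fun s => F #s) fun v => rfl, ← powerset_univ,
    sum_powerset_apply_card, card_univ]

lemma sum_prod_transpose {κ ι β R : Type*} [Fintype κ] [Fintype ι] [DecidableEq ι] [Fintype β]
    [DecidableEq κ] [CommSemiring R] (F : ι → (κ → β) → R) :
    ∑ W : κ → ι → β, ∏ i, F i (fun j => W j i) = ∏ i, ∑ v : κ → β, F i v := by
  rw [Fintype.prod_sum]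
  exact Fintype.sum_equiv (Equiv.piComm _) _ _ fun W => rfl

lemma sum_prod_mul_comp_restrict {ι β R : Type*} [Fintype ι] [DecidableEq ι] [Fintype β]
    [CommSemiring R] (s : Finset ι) {w : β → R} (hw : ∑ b, w b = 1) (G : (s → β) → R) :
    ∑ X : ι → β, (∏ j, w (X j)) * G (fun j => X j) = ∑ W : s → β, (∏ j, w (W j)) * G W := by
  rw [← (Equiv.piEquivPiSubtypeProd (· ∈ s) fun _ => β).symm.sum_comp, Fintype.sum_prod_type]
  refine sum_congr rfl fun W _ => ?_
  have hpos : ∀ (R : {j // j ∉ s} → β) (j : s),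
      (if h : (j : ι) ∈ s then W ⟨j, h⟩ else R ⟨j, h⟩) = W j := fun _ j => dif_pos j.2
  have hneg : ∀ (R : {j // j ∉ s} → β) (j : {j // j ∉ s}),
      (if h : (j : ι) ∈ s then W ⟨j, h⟩ else R ⟨j, h⟩) = R j := fun _ j => dif_neg j.2
  simp only [← Fintype.prod_subtype_mul_prod_subtype (· ∈ s),
    Equiv.piEquivPiSubtypeProd_symm_apply, hpos, hneg]
  rw [← sum_mul, ← mul_sum, sum_pi_prod_eq_one fun _ => hw, mul_one]
  -- the two sides differ only in the `Fintype` instance on `s`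
  convert rfl

lemma ae_biasMeasure_mem {f : ℝ → ℝ} {s : Set ℝ} (hs : MeasurableSet s)
    (hf : ∀ p ∉ s, f p = 0) : ∀ᵐ q ∂biasMeasure f, q ∈ s := by
  change biasMeasure f sᶜ = 0
  rw [biasMeasure, withDensity_apply _ hs.compl]
  exact (setLIntegral_congr_fun hs.compl fun q hq => by simp [hf q hq]).trans lintegral_zero

structure IsBiasDensity (t : ℝ) (f : ℝ → ℝ) : Prop where
  measurable : Measurable f
  nonneg : ∀ p, 0 ≤ f p
  eq_zero_of_notMem : ∀ p ∉ Set.Icc t (1 - t), f p = 0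
  isProbabilityMeasure : IsProbabilityMeasure (biasMeasure f)

namespace IsBiasDensity

variable {t : ℝ} {f : ℝ → ℝ}

lemma integrable (hf : IsBiasDensity t f) : Integrable f := by
  refine (lintegral_ofReal_ne_top_iff_integrable hf.measurable.aestronglyMeasurable
    (ae_of_all _ hf.nonneg)).1 ?_
  have h := hf.isProbabilityMeasure.measure_univ
  rw [biasMeasure, withDensity_apply _ MeasurableSet.univ, Measure.restrict_univ] at h
  simp [h]

lemma ae_mem (hf : IsBiasDensity t f) : ∀ᵐ q ∂biasMeasure f, q ∈ Set.Icc t (1 - t) :=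
  ae_biasMeasure_mem measurableSet_Icc hf.eq_zero_of_notMem

lemma lintegral_ofReal {G : ℝ → ℝ} {M : ℝ} (hf : IsBiasDensity t f) (hG : Measurable G)
    (hG_mem : Set.MapsTo G (Set.Icc t (1 - t)) (Set.Icc 0 M)) :
    ∫⁻ q, ENNReal.ofReal (G q) ∂biasMeasure f
      = ENNReal.ofReal (∫ q in Set.Icc t (1 - t), f q * G q) := by
  have hint : IntegrableOn (fun q => f q * G q) (Set.Icc t (1 - t)) :=
    hf.integrable.integrableOn.mul_bdd hG.aestronglyMeasurable
      (ae_restrict_of_forall_mem measurableSet_Icc fun q hq => by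
        rw [Real.norm_eq_abs, abs_of_nonneg (hG_mem hq).1]
        exact (hG_mem hq).2)
  rw [ofReal_integral_eq_lintegral_ofReal hint (ae_restrict_of_forall_mem measurableSet_Icc
      fun q hq => mul_nonneg (hf.nonneg q) (hG_mem hq).1), biasMeasure,
    lintegral_withDensity_eq_lintegral_mul _ hf.measurable.ennreal_ofReal hG.ennreal_ofReal,
    ← lintegral_indicator measurableSet_Icc]
  refine lintegral_congr fun q => ?_
  by_cases hq : q ∈ Set.Icc t (1 - t)
  · simp [Set.indicator_of_mem hq, ENNReal.ofReal_mul (hf.nonneg q)]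
  · simp [Set.indicator_of_notMem hq, hf.eq_zero_of_notMem q hq]

end IsBiasDensity

lemma Icc_self_sub_subset_Icc_zero_one {t : ℝ} (ht : 0 ≤ t) :
    Set.Icc t (1 - t) ⊆ Set.Icc 0 1 :=
  Set.Icc_subset_Icc ht (sub_le_self 1 ht)

lemma pow_mul_one_sub_pow_mem_Icc {q : ℝ} (hq : q ∈ Set.Icc 0 1) (a b : ℕ) :
    q ^ a * (1 - q) ^ b ∈ Set.Icc 0 1 := by
  have hq' : 0 ≤ 1 - q := sub_nonneg.2 hq.2
  exact ⟨mul_nonneg (pow_nonneg hq.1 a) (pow_nonneg hq' b),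
    mul_le_one₀ (pow_le_one₀ hq.1 hq.2) (pow_nonneg hq' b) (pow_le_one₀ hq' (sub_le_self 1 hq.1))⟩

lemma measurable_accusation {m : ℕ} {g1 g0 : ℝ → ℝ} (hg1 : Measurable g1) (hg0 : Measurable g0) :
    Measurable fun z : (Fin m → ℝ) × (Fin m → Bool) × (Fin m → Bool) =>
      accusation m g1 g0 z.1 z.2.1 z.2.2 := by
  refine measurable_from_prod_countable_left fun xy => Finset.measurable_sum _ fun i _ => ?_
  by_cases hx : xy.1 i <;> by_cases hy : xy.2 i <;>
    simp only [hx, hy, if_true, if_false, Bool.false_eq_true] <;> fun_prop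

lemma mul_sub_div_one_sub_le {t q g M α c x : ℝ} (ht : 0 < t) (hq : q ∈ Set.Icc t (1 - t))
    (hg : g ∈ Set.Icc 0 M) (hα : 0 ≤ α) (hc : 0 ≤ c) (hx : 0 ≤ x) :
    α * g * (c * q - x) / (1 - q) ≤ α * (M * (c / t)) := by
  have hq1 : q ≤ 1 := (Icc_self_sub_subset_Icc_zero_one ht.le hq).2
  have hratio : (c * q - x) / (1 - q) ≤ c / t :=
    div_le_div₀ hc (by nlinarith) ht (by linarith [hq.2])
  rw [mul_div_assoc, mul_assoc]
  exact mul_le_mul_of_nonneg_left ((mul_le_mul_of_nonneg_left hratio hg.1).trans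
    (mul_le_mul_of_nonneg_right hg.2 (div_nonneg hc ht.le))) hα

lemma measurable_of_eq_neg_mul_div {g1 g0 : ℝ → ℝ} (hg1 : Measurable g1)
    (hg0 : ∀ p, g0 p = -p * g1 p / (1 - p)) : Measurable g0 := by
  rw [funext hg0]
  fun_prop

section Column

variable {κ : Type*} [Fintype κ] {t α M : ℝ} {f g1 g0 : ℝ → ℝ}

def columnScore (g1 g0 : ℝ → ℝ) (v : κ → Bool) (b : Bool) (q : ℝ) : ℝ :=
  if b then ∑ j, if v j then g1 q else g0 q else 0

lemma sum_accusation_eq_sum_columnScore {m : ℕ} (p : Fin m → ℝ) (W : κ → Fin m → Bool)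
    (y : Fin m → Bool) :
    ∑ j, accusation m g1 g0 p (W j) y = ∑ i, columnScore g1 g0 (fun j => W j i) (y i) (p i) := by
  simp only [accusation, columnScore]
  rw [sum_comm]
  refine sum_congr rfl fun i _ => ?_
  cases y i <;> simp

lemma measurable_columnScore (hg1 : Measurable g1) (hg0 : Measurable g0) (v : κ → Bool)
    (b : Bool) : Measurable (columnScore g1 g0 v b) := by
  cases b
  · exact measurable_const
  · exact Finset.measurable_sum _ fun j _ => .ite (.const _) hg1 hg0

lemma neg_mul_columnScore_true (hg0 : ∀ p, g0 p = -p * g1 p / (1 - p)) {q : ℝ} (hq : q ≠ 1)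
    (v : κ → Bool) :
    -α * columnScore g1 g0 v true q
      = α * g1 q * (Fintype.card κ * q - #{j | v j}) / (1 - q) := by
  have hcard := card_filter_add_card_filter_not (s := univ) (fun j => v j = true)
  rw [card_univ] at hcard
  have hq' : 1 - q ≠ 0 := sub_ne_zero.2 hq.symm
  rw [columnScore, if_pos rfl, sum_ite, sum_const, sum_const, nsmul_eq_mul, nsmul_eq_mul, hg0,
    ← hcard]
  push_cast
  field_simp
  ring

def columnMGF (f g1 g0 : ℝ → ℝ) (α : ℝ) (v : κ → Bool) (b : Bool) : ℝ≥0∞ :=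
  ∫⁻ q, (∏ j, bernMass q (v j)) * ENNReal.ofReal (exp (-α * columnScore g1 g0 v b q))
    ∂biasMeasure f

lemma lintegral_rows_eq_prod_columnMGF {m : ℕ} [IsProbabilityMeasure (biasMeasure f)]
    (hg1 : Measurable g1) (hg0 : Measurable g0) (W : κ → Fin m → Bool) (y : Fin m → Bool) :
    ∫⁻ p, (∏ j, ∏ i, bernMass (p i) (W j i))
        * ENNReal.ofReal (exp (-α * ∑ j, accusation m g1 g0 p (W j) y))
        ∂Measure.pi (fun _ => biasMeasure f)
      = ∏ i, columnMGF f g1 g0 α (fun j => W j i) (y i) := by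
  let Φ : Fin m → ℝ → ℝ≥0∞ := fun i q => (∏ j, bernMass q (W j i))
    * ENNReal.ofReal (exp (-α * columnScore g1 g0 (fun j => W j i) (y i) q))
  have hΦ : ∀ i, Measurable (Φ i) := fun i =>
    (Finset.measurable_prod _ fun j _ => measurable_bernMass _).mul
      (((measurable_columnScore hg1 hg0 _ _).const_mul (-α)).exp.ennreal_ofReal)
  have hfactor : ∀ p : Fin m → ℝ, (∏ j, ∏ i, bernMass (p i) (W j i))
      * ENNReal.ofReal (exp (-α * ∑ j, accusation m g1 g0 p (W j) y)) = ∏ i, Φ i (p i) := by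
    intro p
    rw [sum_accusation_eq_sum_columnScore, mul_sum, exp_sum,
      ENNReal.ofReal_prod_of_nonneg fun _ _ => (exp_pos _).le, prod_comm, ← prod_mul_distrib]
  have hindep :
      iIndepFun (fun i (p : Fin m → ℝ) => Φ i (p i)) (Measure.pi fun _ => biasMeasure f) :=
    iIndepFun_pi (X := Φ) fun i => (hΦ i).aemeasurable
  rw [lintegral_congr hfactor, lintegral_prod_eq_prod_lintegral_of_indepFun univ _ hindep
    fun i => (hΦ i).comp (measurable_pi_apply i)]
  exact prod_congr rfl fun i _ => (measurePreserving_eval _ i).lintegral_comp (hΦ i)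

lemma columnMGF_false (hf : IsBiasDensity t f) (ht : 0 ≤ t) (v : κ → Bool) :
    columnMGF f g1 g0 α v false = ENNReal.ofReal (E₀ t f (Fintype.card κ) #{j | v j}) := by
  have hae : ∀ᵐ q ∂biasMeasure f,
      (∏ j, bernMass q (v j)) * ENNReal.ofReal (exp (-α * columnScore g1 g0 v false q))
        = ENNReal.ofReal (q ^ #{j | v j} * (1 - q) ^ (Fintype.card κ - #{j | v j})) :=
    hf.ae_mem.mono fun q hq => by
      simp [columnScore, prod_bernMass (Icc_self_sub_subset_Icc_zero_one ht hq)]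
  rw [columnMGF, lintegral_congr_ae hae, hf.lintegral_ofReal (by fun_prop)
    fun q hq => pow_mul_one_sub_pow_mem_Icc (Icc_self_sub_subset_Icc_zero_one ht hq) _ _]
  simp only [E₀, mul_assoc]

lemma columnMGF_true (hf : IsBiasDensity t f) (ht : 0 < t) (hg1_meas : Measurable g1)
    (hg1 : Set.MapsTo g1 (Set.Icc t (1 - t)) (Set.Icc 0 M))
    (hg0 : ∀ p, g0 p = -p * g1 p / (1 - p)) (hα : 0 ≤ α) (v : κ → Bool) :
    columnMGF f g1 g0 α v true = ENNReal.ofReal (E₁ t f g1 α (Fintype.card κ) #{j | v j}) := by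
  set c := Fintype.card κ
  set x := #{j | v j}
  have hae : ∀ᵐ q ∂biasMeasure f,
      (∏ j, bernMass q (v j)) * ENNReal.ofReal (exp (-α * columnScore g1 g0 v true q))
        = ENNReal.ofReal (q ^ x * (1 - q) ^ (c - x)
            * exp (α * g1 q * ((c : ℝ) * q - (x : ℝ)) / (1 - q))) :=
    hf.ae_mem.mono fun q hq => by
      have hq01 := Icc_self_sub_subset_Icc_zero_one ht.le hq
      rw [prod_bernMass hq01, neg_mul_columnScore_true hg0 (by linarith [hq.2]),
        ENNReal.ofReal_mul (pow_mul_one_sub_pow_mem_Icc hq01 _ _).1]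
  have hbound : Set.MapsTo (fun q => q ^ x * (1 - q) ^ (c - x)
      * exp (α * g1 q * ((c : ℝ) * q - (x : ℝ)) / (1 - q)))
      (Set.Icc t (1 - t)) (Set.Icc 0 (exp (α * (M * (c / t))))) := fun q hq => by
    have hpow := pow_mul_one_sub_pow_mem_Icc (Icc_self_sub_subset_Icc_zero_one ht.le hq) x (c - x)
    exact ⟨mul_nonneg hpow.1 (exp_pos _).le, (mul_le_of_le_one_left (exp_pos _).le hpow.2).trans
      (exp_le_exp.2 (mul_sub_div_one_sub_le ht hq (hg1 hq) hα c.cast_nonneg x.cast_nonneg))⟩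
  rw [columnMGF, lintegral_congr_ae hae, hf.lintegral_ofReal (by fun_prop) hbound]
  simp only [E₁, mul_assoc]

end Column

def columnBound (t : ℝ) (f g1 : ℝ → ℝ) (α : ℝ) (c x : ℕ) : ℝ :=
  if x = 0 then E₀ t f c x
  else if x = c then E₁ t f g1 α c x
  else max (E₀ t f c x) (E₁ t f g1 α c x)

def mgfBound (t : ℝ) (f g1 : ℝ → ℝ) (α : ℝ) (c : ℕ) : ℝ :=
  E₀ t f c 0 + E₁ t f g1 α c c
    + ∑ x ∈ Finset.Ioo 0 c, (c.choose x : ℝ) * max (E₀ t f c x) (E₁ t f g1 α c x)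

section Bound

variable {t α : ℝ} {f g1 : ℝ → ℝ}

lemma E₀_nonneg (hf : ∀ p, 0 ≤ f p) (ht : 0 ≤ t) (c x : ℕ) : 0 ≤ E₀ t f c x :=
  setIntegral_nonneg measurableSet_Icc fun q hq => by
    have hpow := pow_mul_one_sub_pow_mem_Icc (Icc_self_sub_subset_Icc_zero_one ht hq) x (c - x)
    rw [mul_assoc]
    exact mul_nonneg (hf q) hpow.1

lemma E₁_nonneg (hf : ∀ p, 0 ≤ f p) (ht : 0 ≤ t) (c x : ℕ) : 0 ≤ E₁ t f g1 α c x :=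
  setIntegral_nonneg measurableSet_Icc fun q hq => by
    have hpow := pow_mul_one_sub_pow_mem_Icc (Icc_self_sub_subset_Icc_zero_one ht hq) x (c - x)
    rw [mul_assoc (f q)]
    exact mul_nonneg (mul_nonneg (hf q) hpow.1) (exp_pos _).le

lemma columnBound_nonneg (hf : ∀ p, 0 ≤ f p) (ht : 0 ≤ t) (c x : ℕ) :
    0 ≤ columnBound t f g1 α c x := by
  unfold columnBound
  split_ifs
  exacts [E₀_nonneg hf ht c x, E₁_nonneg hf ht c x, (E₀_nonneg hf ht c x).trans (le_max_left _ _)]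

lemma sum_columnBound {c : ℕ} (hc : c ≠ 0) :
    ∑ x ∈ range (c + 1), c.choose x • columnBound t f g1 α c x = mgfBound t f g1 α c := by
  have hrange : range (c + 1) = insert 0 (insert c (Ioo 0 c)) := by
    ext x
    simp only [mem_range, mem_insert, mem_Ioo]
    omega
  have hmid : ∀ x ∈ Ioo 0 c, c.choose x • columnBound t f g1 α c x
      = (c.choose x : ℝ) * max (E₀ t f c x) (E₁ t f g1 α c x) := fun x hx => by
    rw [mem_Ioo] at hx
    rw [columnBound, if_neg hx.1.ne', if_neg hx.2.ne, nsmul_eq_mul]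
  rw [hrange, sum_insert (by simp [hc.symm]), sum_insert (by simp), sum_congr rfl hmid,
    mgfBound, columnBound, columnBound, if_pos rfl, if_neg hc, if_pos rfl, Nat.choose_zero_right,
    Nat.choose_self, one_smul, one_smul, add_assoc]

lemma mgfBound_nonneg (hf : ∀ p, 0 ≤ f p) (ht : 0 ≤ t) {c : ℕ} (hc : c ≠ 0) :
    0 ≤ mgfBound t f g1 α c := by
  rw [← sum_columnBound hc]
  exact sum_nonneg fun x _ => smul_nonneg (Nat.zero_le _) (columnBound_nonneg hf ht c x)

end Bound

section Coalition

variable {κ : Type*} [Fintype κ] {t α M : ℝ} {f g1 g0 : ℝ → ℝ}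

lemma columnMGF_le_columnBound (hf : IsBiasDensity t f) (ht : 0 < t) (hg1_meas : Measurable g1)
    (hg1 : Set.MapsTo g1 (Set.Icc t (1 - t)) (Set.Icc 0 M))
    (hg0 : ∀ p, g0 p = -p * g1 p / (1 - p)) (hα : 0 ≤ α) {v : κ → Bool} {b : Bool}
    (hb0 : (∀ j, v j = false) → b = false) (hb1 : (∀ j, v j = true) → b = true) :
    columnMGF f g1 g0 α v b
      ≤ ENNReal.ofReal (columnBound t f g1 α (Fintype.card κ) #{j | v j}) := by
  rw [columnBound]
  split_ifs with h0 hc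
  · rw [hb0 (by simpa [card_filter_eq_zero_iff] using h0), columnMGF_false hf ht.le]
  · rw [hb1 (by simpa [← card_univ, card_filter_eq_iff] using hc),
      columnMGF_true hf ht hg1_meas hg1 hg0 hα]
  · cases b
    · rw [columnMGF_false hf ht.le]
      exact ENNReal.ofReal_le_ofReal (le_max_left _ _)
    · rw [columnMGF_true hf ht hg1_meas hg1 hg0 hα]
      exact ENNReal.ofReal_le_ofReal (le_max_right _ _)

lemma sum_lintegral_coalition_le [DecidableEq κ] {m : ℕ} (hf : IsBiasDensity t f) (ht : 0 < t)
    (hg1_meas : Measurable g1) (hg1 : Set.MapsTo g1 (Set.Icc t (1 - t)) (Set.Icc 0 M))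
    (hg0 : ∀ p, g0 p = -p * g1 p / (1 - p)) (hα : 0 ≤ α) (hκ : Fintype.card κ ≠ 0)
    (σ : (κ → Fin m → Bool) → Fin m → Bool)
    (hσ0 : ∀ W i, (∀ j, W j i = false) → σ W i = false)
    (hσ1 : ∀ W i, (∀ j, W j i = true) → σ W i = true) :
    ∑ W, ∫⁻ p, (∏ j, ∏ i, bernMass (p i) (W j i))
        * ENNReal.ofReal (exp (-α * ∑ j, accusation m g1 g0 p (W j) (σ W)))
        ∂Measure.pi (fun _ => biasMeasure f)
      ≤ ENNReal.ofReal (mgfBound t f g1 α (Fintype.card κ)) ^ m := by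
  have := hf.isProbabilityMeasure
  have hg0_meas := measurable_of_eq_neg_mul_div hg1_meas hg0
  set B : ℕ → ℝ := columnBound t f g1 α (Fintype.card κ)
  calc _ = ∑ W : κ → Fin m → Bool, ∏ i, columnMGF f g1 g0 α (fun j => W j i) (σ W i) :=
        sum_congr rfl fun W _ => lintegral_rows_eq_prod_columnMGF hg1_meas hg0_meas W (σ W)
    _ ≤ ∑ W : κ → Fin m → Bool, ∏ i, ENNReal.ofReal (B #{j | W j i}) := by
        gcongr with W _ i _
        exact columnMGF_le_columnBound hf ht hg1_meas hg1 hg0 hα (hσ0 W i) (hσ1 W i)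
    _ = (∑ v : κ → Bool, ENNReal.ofReal (B #{j | v j})) ^ m := by
        rw [sum_prod_transpose fun (_ : Fin m) (v : κ → Bool) => ENNReal.ofReal (B #{j | v j}),
          prod_const, card_univ, Fintype.card_fin]
    _ = ENNReal.ofReal (mgfBound t f g1 α (Fintype.card κ)) ^ m := by
        rw [← ENNReal.ofReal_sum_of_nonneg fun v _ => columnBound_nonneg hf.nonneg ht.le _ _,
          sum_comp_card_filter, sum_columnBound hκ]

lemma lintegral_codeMeasure_exp_le {n m : ℕ}
    (hf : IsBiasDensity t f) (ht : 0 < t) (hg1_meas : Measurable g1)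
    (hg1 : Set.MapsTo g1 (Set.Icc t (1 - t)) (Set.Icc 0 M))
    (hg0 : ∀ p, g0 p = -p * g1 p / (1 - p)) (hα : 0 ≤ α) {C : Finset (Fin n)} (hC : #C ≠ 0)
    (y : (Fin n → Fin m → Bool) → Fin m → Bool)
    (hy_dep : ∀ X X', (∀ j ∈ C, X j = X' j) → y X = y X')
    (hy_mark1 : ∀ X i, (∀ j ∈ C, X j i = true) → y X i = true)
    (hy_mark0 : ∀ X i, (∀ j ∈ C, X j i = false) → y X i = false) :
    ∫⁻ z, ENNReal.ofReal (exp (-α * ∑ j ∈ C, accusation m g1 g0 z.1 (z.2 j) (y z.2)))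
        ∂codeMeasure n m f
      ≤ ENNReal.ofReal (mgfBound t f g1 α #C) ^ m := by
  have := hf.isProbabilityMeasure
  have hacc := measurable_accusation (m := m) hg1_meas (measurable_of_eq_neg_mul_div hg1_meas hg0)
  have hy : Measurable y := measurable_of_countable y
  let padRows : (C → Fin m → Bool) → Fin n → Fin m → Bool :=
    fun W j => if h : j ∈ C then W ⟨j, h⟩ else fun _ => false
  have hpad : ∀ W (j : C), padRows W j = W j := fun W j => dif_pos j.2
  have hrows : ∀ᵐ p ∂Measure.pi fun _ => biasMeasure f,
      ∑ X, (∏ j, ∏ i, bernMass (p i) (X j i))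
          * ENNReal.ofReal (exp (-α * ∑ j ∈ C, accusation m g1 g0 p (X j) (y X)))
        = ∑ W : C → Fin m → Bool, (∏ j, ∏ i, bernMass (p i) (W j i))
          * ENNReal.ofReal (exp (-α * ∑ j, accusation m g1 g0 p (W j) (y (padRows W)))) := by
    filter_upwards [Measure.ae_pi_le_pi (Filter.eventually_pi fun _ => hf.ae_mem)] with p hp
    rw [← sum_prod_mul_comp_restrict C
      (sum_prod_bernMass fun i => Icc_self_sub_subset_Icc_zero_one ht.le (hp i))]
    refine sum_congr rfl fun X _ => ?_
    rw [← sum_coe_sort C,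
      hy_dep X (padRows fun j => X j) fun j hj => (hpad (fun j => X j) ⟨j, hj⟩).symm]
  rw [lintegral_codeMeasure f (by fun_prop), lintegral_congr_ae hrows,
    lintegral_finsetSum _ fun W _ => by fun_prop]
  simpa only [Fintype.card_coe] using sum_lintegral_coalition_le hf ht hg1_meas hg1 hg0 hα
    (by rwa [Fintype.card_coe]) (fun W => y (padRows W))
    (fun W i h => hy_mark0 _ i fun j hj => by rw [hpad W ⟨j, hj⟩]; exact h _)
    (fun W i h => hy_mark1 _ i fun j hj => by rw [hpad W ⟨j, hj⟩]; exact h _)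

end Coalition

theorem coalition_mgf_bound_general
    (n m : ℕ)
    (t : ℝ) (ht : t ∈ Set.Ioo (0:ℝ) (1/2))
    (f : ℝ → ℝ) (hf_meas : Measurable f) (hf_nonneg : ∀ p, 0 ≤ f p)
    (hf_supp : ∀ p, p ∉ Set.Icc t (1-t) → f p = 0)
    (hf_prob : IsProbabilityMeasure (biasMeasure f))
    (g1 : ℝ → ℝ) (hg1_meas : Measurable g1)
    (hg1_pos : ∀ p ∈ Set.Ioo (0:ℝ) 1, 0 < g1 p)
    (hg1_anti : AntitoneOn g1 (Set.Ioo (0:ℝ) 1))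
    (g0 : ℝ → ℝ) (hg0 : ∀ p, g0 p = - p * g1 p / (1 - p))
    (C : Finset (Fin n)) (hC : 2 ≤ C.card)
    (Ω' : Type*) [MeasurableSpace Ω'] (μ' : Measure Ω') [IsProbabilityMeasure μ']
    (ρ : (Fin n → Fin m → Bool) → Ω' → (Fin m → Bool))
    (hρ_meas : Measurable (fun q : (Fin n → Fin m → Bool) × Ω' => ρ q.1 q.2))
    (hρ_dep : ∀ X X' r, (∀ j ∈ C, X j = X' j) → ρ X r = ρ X' r)
    (hρ_mark1 : ∀ X r i, (∀ j ∈ C, X j i = true) → ρ X r i = true)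
    (hρ_mark0 : ∀ X r i, (∀ j ∈ C, X j i = false) → ρ X r i = false)
    (α : ℝ) (hα : 0 < α) :
    (∫ q, Real.exp (-α * ∑ j ∈ C, accusation m g1 g0 q.1.1 (q.1.2 j) (ρ q.1.2 q.2))
        ∂((codeMeasure n m f).prod μ'))
      ≤ (E₀ t f C.card 0 + E₁ t f g1 α C.card C.card
          + ∑ x ∈ Finset.Ioo 0 C.card,
              (C.card.choose x : ℝ) * max (E₀ t f C.card x) (E₁ t f g1 α C.card x)) ^ m := by
  have hf : IsBiasDensity t f := ⟨hf_meas, hf_nonneg, hf_supp, hf_prob⟩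
  have hg1 : Set.MapsTo g1 (Set.Icc t (1 - t)) (Set.Icc 0 (g1 t)) := fun q hq => by
    have hq' : q ∈ Set.Ioo (0 : ℝ) 1 := ⟨ht.1.trans_le hq.1, by linarith [hq.2, ht.1]⟩
    exact ⟨(hg1_pos q hq').le, hg1_anti ⟨ht.1, by linarith [ht.2]⟩ hq' hq.1⟩
  have := isProbabilityMeasure_codeMeasure (n := n) (m := m)
    (hf.ae_mem.mono fun q hq => Icc_self_sub_subset_Icc_zero_one ht.1.le hq)
  have hB := mgfBound_nonneg (g1 := g1) (α := α) hf_nonneg ht.1.le (by omega : #C ≠ 0)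
  have hacc := measurable_accusation (m := m) hg1_meas (measurable_of_eq_neg_mul_div hg1_meas hg0)
  have hmeas : Measurable fun q : ((Fin m → ℝ) × (Fin n → Fin m → Bool)) × Ω' =>
      exp (-α * ∑ j ∈ C, accusation m g1 g0 q.1.1 (q.1.2 j) (ρ q.1.2 q.2)) := by
    fun_prop
  rw [integral_eq_lintegral_of_nonneg_ae (ae_of_all _ fun _ => (exp_pos _).le)
    hmeas.aestronglyMeasurable]
  refine ENNReal.toReal_le_of_le_ofReal (pow_nonneg hB m) ?_
  show _ ≤ ENNReal.ofReal (mgfBound t f g1 α #C ^ m)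
  rw [lintegral_prod_symm _ hmeas.ennreal_ofReal.aemeasurable, ENNReal.ofReal_pow hB]
  calc _ ≤ ∫⁻ _, ENNReal.ofReal (mgfBound t f g1 α #C) ^ m ∂μ' := lintegral_mono fun r =>
        lintegral_codeMeasure_exp_le hf ht.1 hg1_meas hg1 hg0 hα.le (by omega) (ρ · r)
          (fun X X' => hρ_dep X X' r) (fun X => hρ_mark1 X r) (fun X => hρ_mark0 X r)
    _ = _ := by rw [lintegral_const, measure_univ, mul_one]

/-- in the code-generation model, for a coalition `C` of size `c ≥ 2` using
any admissible strategy (a possibly randomized function `ρ` of the coalition rows only,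
satisfying the marking condition) and every `α > 0`,
`E[exp (-α S)] ≤ (E_{0,0} + E_{1,c} + Σ_{x=1}^{c-1} C(c,x)·max (E_{0,x}) (E_{1,x}))^m`. -/
theorem coalition_mgf_bound
    (n m : ℕ) (hn : 1 ≤ n) (hm : 1 ≤ m)
    (t : ℝ) (ht : t ∈ Set.Ioo (0:ℝ) (1/2))
    (f : ℝ → ℝ) (hf_meas : Measurable f) (hf_nonneg : ∀ p, 0 ≤ f p)
    (hf_supp : ∀ p, p ∉ Set.Icc t (1-t) → f p = 0)
    (hf_prob : IsProbabilityMeasure (biasMeasure f))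
    (g1 : ℝ → ℝ) (hg1_meas : Measurable g1)
    (hg1_pos : ∀ p ∈ Set.Ioo (0:ℝ) 1, 0 < g1 p)
    (hg1_anti : AntitoneOn g1 (Set.Ioo (0:ℝ) 1))
    (g0 : ℝ → ℝ) (hg0 : ∀ p, g0 p = - p * g1 p / (1 - p))
    (C : Finset (Fin n)) (hC : 2 ≤ C.card)
    (Ω' : Type*) [MeasurableSpace Ω'] (μ' : Measure Ω') [IsProbabilityMeasure μ']
    (ρ : (Fin n → Fin m → Bool) → Ω' → (Fin m → Bool))
    (hρ_meas : Measurable (fun q : (Fin n → Fin m → Bool) × Ω' => ρ q.1 q.2))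
    (hρ_dep : ∀ X X' r, (∀ j ∈ C, X j = X' j) → ρ X r = ρ X' r)
    (hρ_mark1 : ∀ X r i, (∀ j ∈ C, X j i = true) → ρ X r i = true)
    (hρ_mark0 : ∀ X r i, (∀ j ∈ C, X j i = false) → ρ X r i = false)
    (α : ℝ) (hα : 0 < α) :
    (∫ q, Real.exp (-α * ∑ j ∈ C, accusation m g1 g0 q.1.1 (q.1.2 j) (ρ q.1.2 q.2))
        ∂((codeMeasure n m f).prod μ'))
      ≤ (E₀ t f C.card 0 + E₁ t f g1 α C.card C.card
          + ∑ x ∈ Finset.Ioo 0 C.card,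
              (C.card.choose x : ℝ) * max (E₀ t f C.card x) (E₁ t f g1 α C.card x)) ^ m :=
  coalition_mgf_bound_general n m t ht f hf_meas hf_nonneg hf_supp hf_prob g1 hg1_meas hg1_pos
    hg1_anti g0 hg0 C hC Ω' μ' ρ hρ_meas hρ_dep hρ_mark1 hρ_mark0 α hα

end
end

section
/- Let t ∈ (0,1/2) and t' = arcsin(√t). Let p be a random variable with density f^T on [t,1−t], and conditionally on p let X ∈ {0,1} be Bernoulli with P[X = 1] = p; set U = g1^T(p) if X = 1 and U = g0^T(p) if X = 0. Then U has probability density φ(u) = 2/((π − 4t')·(1 + u²)²) on the set T = [√(t/(1−t)), √((1−t)/t)] ∪ [−√((1−t)/t), −√(t/(1−t))] (and density 0 outside T); that is, for every bounded measurable h: ℝ → ℝ, E[h(U)] = ∫_T h(u)·2/((π − 4t')·(1 + u²)²) du. -/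
open MeasureTheory Real

noncomputable section

def tprime (t : ℝ) : ℝ := Real.arcsin (Real.sqrt t)

/-- Tardos' bias density (extended by `0` outside `[t, 1-t]`). -/
def fT (t : ℝ) (p : ℝ) : ℝ :=
  if p ∈ Set.Icc t (1 - t) then 1 / ((π - 4 * tprime t) * Real.sqrt (p * (1 - p))) else 0

/-- Tardos' accusation function `g1`. -/
def g1T (p : ℝ) : ℝ := Real.sqrt ((1 - p) / p)

/-- Tardos' accusation function `g0`. -/
def g0T (p : ℝ) : ℝ := - Real.sqrt (p / (1 - p))

/-- The joint law of a single bias `p` (with density `f^T`) and the corresponding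
Bernoulli(`p`) code symbol `X`. -/
def columnMeasure (t : ℝ) : Measure (ℝ × Bool) :=
  (biasMeasure (fT t)).bind fun p => (Measure.dirac p).prod (bern p)

/-!
Conditioning on `X`, the law of `U` is the sum of the push-forwards of `p f^T(p) dp` under `g1^T`
and of `(1 - p) f^T(p) dp` under `g0^T`. On `[t, 1 - t]` the map `g1^T` is a decreasing
diffeomorphism onto `[√(t/(1-t)), √((1-t)/t)]`, and the one-dimensional change of variables
turns `p f^T(p) dp` into `φ(u) du` there. The substitution `p ↦ 1 - p` reduces the branch
`X = 0` to the branch `X = 1`, since `f^T` is symmetric about `1/2`, `g0^T (1 - p) = -g1^T p`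
and `φ` is even.
-/

open Set
open scoped ENNReal

lemma lintegral_bern (p : ℝ) (f : Bool → ℝ≥0∞) :
    ∫⁻ b, f b ∂bern p = ENNReal.ofReal p * f true + ENNReal.ofReal (1 - p) * f false := by
  simp [bern]

lemma dirac_prod_bern (p : ℝ) :
    (Measure.dirac p).prod (bern p)
      = ENNReal.ofReal p • Measure.dirac (p, true)
        + ENNReal.ofReal (1 - p) • Measure.dirac (p, false) := by
  simp [bern, Measure.dirac_prod, Measure.map_smul, Measure.map_add _ _ measurable_prodMk_left,
    Measure.map_dirac]

lemma measurable_dirac_prod_bern : Measurable fun p : ℝ => (Measure.dirac p).prod (bern p) := by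
  refine Measure.measurable_of_measurable_coe _ fun s hs => ?_
  simp only [dirac_prod_bern, Measure.coe_add, Measure.coe_smul, Pi.add_apply, Pi.smul_apply,
    smul_eq_mul]
  have hd : ∀ b : Bool, Measurable fun p : ℝ => Measure.dirac (p, b) s := fun b =>
    (Measure.measurable_coe hs).comp (Measure.measurable_dirac.comp measurable_prodMk_right)
  fun_prop

lemma lintegral_bind_dirac_prod_bern (μ : Measure ℝ) {F : ℝ × Bool → ℝ≥0∞}
    (hF : Measurable F) :
    ∫⁻ q, F q ∂μ.bind (fun p => (Measure.dirac p).prod (bern p))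
      = ∫⁻ p, ENNReal.ofReal p * F (p, true) ∂μ
        + ∫⁻ p, ENNReal.ofReal (1 - p) * F (p, false) ∂μ := by
  rw [Measure.lintegral_bind measurable_dirac_prod_bern.aemeasurable hF.aemeasurable,
    ← lintegral_add_left (by fun_prop)]
  congr with p
  rw [Measure.dirac_prod, lintegral_map hF measurable_prodMk_left, lintegral_bern]

def accusationDensity (t u : ℝ) : ℝ := 2 / ((π - 4 * tprime t) * (1 + u ^ 2) ^ 2)

section Tardos

variable {t : ℝ}

lemma pi_sub_four_tprime_pos (ht : t < 1 / 2) : 0 < π - 4 * tprime t := by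
  have hsqrt : √t < √2 / 2 := by
    rw [Real.sqrt_lt' (by positivity), div_pow, Real.sq_sqrt zero_le_two]
    linarith
  have hlt : tprime t < π / 4 := by
    rw [tprime, Real.arcsin_lt_iff_lt_sin' ⟨by linarith [pi_pos], by linarith [pi_pos]⟩,
      Real.sin_pi_div_four]
    exact hsqrt
  linarith

lemma fT_nonneg (ht : t < 1 / 2) (p : ℝ) : 0 ≤ fT t p := by
  unfold fT
  split_ifs
  · have := pi_sub_four_tprime_pos ht
    positivity
  · exact le_rfl

@[fun_prop]
lemma measurable_fT (t : ℝ) : Measurable (fT t) :=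
  Measurable.ite measurableSet_Icc (by fun_prop) measurable_const

lemma fT_one_sub (t p : ℝ) : fT t (1 - p) = fT t p := by
  have hmem : 1 - p ∈ Icc t (1 - t) ↔ p ∈ Icc t (1 - t) := by
    simp only [mem_Icc]
    constructor <;> rintro ⟨h₁, h₂⟩ <;> constructor <;> linarith
  simp only [fT, hmem, sub_sub_cancel, mul_comm (1 - p) p]

lemma g0T_one_sub (p : ℝ) : g0T (1 - p) = -g1T p := by
  rw [g0T, g1T, sub_sub_cancel]

@[fun_prop]
lemma measurable_accusationDensity (t : ℝ) : Measurable (accusationDensity t) := by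
  unfold accusationDensity
  fun_prop

lemma accusationDensity_neg (t u : ℝ) : accusationDensity t (-u) = accusationDensity t u := by
  rw [accusationDensity, accusationDensity, neg_sq]

lemma accusationDensity_nonneg (ht : t < 1 / 2) (u : ℝ) : 0 ≤ accusationDensity t u := by
  have := pi_sub_four_tprime_pos ht
  unfold accusationDensity
  positivity

lemma hasDerivAt_g1T {p : ℝ} (hp0 : 0 < p) (hp1 : p < 1) :
    HasDerivAt g1T (-1 / p ^ 2 / (2 * g1T p)) p := by
  have hq : HasDerivAt (fun x => (1 - x) / x) (-1 / p ^ 2) p :=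
    (((hasDerivAt_id' p).const_sub 1).div (hasDerivAt_id' p) hp0.ne').congr_deriv (by ring)
  exact hq.sqrt (div_pos (by linarith) hp0).ne'

lemma strictAntiOn_g1T : StrictAntiOn g1T (Ioc 0 1) := by
  intro a ⟨ha0, _⟩ b ⟨hb0, hb1⟩ hab
  apply Real.sqrt_lt_sqrt (div_nonneg (by linarith) hb0.le)
  rw [div_lt_div_iff₀ hb0 ha0]
  nlinarith

lemma image_g1T_Icc {a b : ℝ} (ha : 0 < a) (hab : a ≤ b) (hb : b ≤ 1) :
    g1T '' Icc a b = Icc (g1T b) (g1T a) := by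
  refine ContinuousOn.image_Icc_of_antitoneOn hab ?_
    (strictAntiOn_g1T.mono fun p hp => ⟨ha.trans_le hp.1, hp.2.trans hb⟩).antitoneOn
  exact (continuousOn_const.sub continuousOn_id).div continuousOn_id
    (fun p hp => (ha.trans_le hp.1).ne') |>.sqrt

lemma fT_mul_eq_abs_deriv_g1T_mul (ht : 0 < t) {p : ℝ} (hp : p ∈ Icc t (1 - t)) :
    fT t p * p = |-1 / p ^ 2 / (2 * g1T p)| * accusationDensity t (g1T p) := by
  have hp0 : 0 < p := ht.trans_le hp.1
  have hp1 : 0 < 1 - p := by linarith [hp.2]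
  have hs : 0 < g1T p := Real.sqrt_pos.mpr (div_pos hp1 hp0)
  have hsq : g1T p ^ 2 = (1 - p) / p := Real.sq_sqrt (div_pos hp1 hp0).le
  have hprod : √(p * (1 - p)) = p * g1T p := by
    rw [show p * (1 - p) = p ^ 2 * ((1 - p) / p) by field_simp, Real.sqrt_mul (sq_nonneg p),
      Real.sqrt_sq hp0.le, g1T]
  rw [fT, if_pos hp, hprod, accusationDensity, hsq, neg_div, neg_div, abs_neg,
    abs_of_pos (by positivity)]
  field_simp
  ring

lemma lintegral_fT_mul_comp_g1T (ht₀ : 0 < t) (ht : t < 1 / 2) (G : ℝ → ℝ≥0∞) :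
    ∫⁻ p, ENNReal.ofReal (fT t p) * ENNReal.ofReal p * G (g1T p)
      = ∫⁻ u in Icc √(t / (1 - t)) √((1 - t) / t),
          ENNReal.ofReal (accusationDensity t u) * G u := by
  have hsupp : (fun p => ENNReal.ofReal (fT t p) * ENNReal.ofReal p * G (g1T p)).support
      ⊆ Icc t (1 - t) :=
    Function.support_subset_iff'.2 fun p hp => by
      rw [fT, if_neg hp, ENNReal.ofReal_zero, zero_mul, zero_mul]
  have hg1T_one_sub : g1T (1 - t) = √(t / (1 - t)) := by rw [g1T, sub_sub_cancel]
  rw [← setLIntegral_eq_of_support_subset hsupp, ← hg1T_one_sub, ← g1T,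
    ← image_g1T_Icc ht₀ (by linarith) (by linarith),
    lintegral_image_eq_lintegral_abs_deriv_mul measurableSet_Icc
      (fun p hp => (hasDerivAt_g1T (ht₀.trans_le hp.1) (by linarith [hp.2])).hasDerivWithinAt)
      (strictAntiOn_g1T.mono fun p hp => ⟨ht₀.trans_le hp.1, by linarith [hp.2]⟩).injOn]
  refine setLIntegral_congr_fun measurableSet_Icc fun p hp => ?_
  rw [← ENNReal.ofReal_mul (fT_nonneg ht p), fT_mul_eq_abs_deriv_g1T_mul ht₀ hp,
    ENNReal.ofReal_mul (abs_nonneg _), mul_assoc]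

lemma lintegral_fT_mul_one_sub_comp_g0T (ht₀ : 0 < t) (ht : t < 1 / 2) (G : ℝ → ℝ≥0∞) :
    ∫⁻ p, ENNReal.ofReal (fT t p) * ENNReal.ofReal (1 - p) * G (g0T p)
      = ∫⁻ u in Icc (-√((1 - t) / t)) (-√(t / (1 - t))),
          ENNReal.ofReal (accusationDensity t u) * G u := by
  let φG := fun u => ENNReal.ofReal (accusationDensity t u) * G u
  calc _ = ∫⁻ p, ENNReal.ofReal (fT t p) * ENNReal.ofReal p * G (-g1T p) := by
        rw [← lintegral_sub_left_eq_self _ 1]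
        simp only [fT_one_sub, sub_sub_cancel, g0T_one_sub]
    _ = ∫⁻ u in Icc √(t / (1 - t)) √((1 - t) / t),
          ENNReal.ofReal (accusationDensity t u) * G (-u) :=
        lintegral_fT_mul_comp_g1T ht₀ ht fun u => G (-u)
    _ = ∫⁻ u in Neg.neg ⁻¹' Icc (-√((1 - t) / t)) (-√(t / (1 - t))), φG (-u) := by
        simp [φG, accusationDensity_neg]
    _ = _ := (Measure.measurePreserving_neg volume).setLIntegral_comp_preimage_emb
          (Homeomorph.neg ℝ).measurableEmbedding φG _

end Tardos

def accusationValue (q : ℝ × Bool) : ℝ := if q.2 then g1T q.1 else g0T q.1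

@[fun_prop]
lemma measurable_accusationValue : Measurable accusationValue :=
  measurable_from_prod_countable_left fun b => by
    cases b
    · exact Real.continuous_sqrt.measurable.comp (by fun_prop) |>.neg
    · exact Real.continuous_sqrt.measurable.comp (by fun_prop)

theorem map_accusationValue_columnMeasure {t : ℝ} (ht : t ∈ Ioo (0 : ℝ) (1 / 2)) :
    (columnMeasure t).map accusationValue
      = (volume.restrict (Icc √(t / (1 - t)) √((1 - t) / t)
          ∪ Icc (-√((1 - t) / t)) (-√(t / (1 - t))))).withDensity
          fun u => ENNReal.ofReal (accusationDensity t u) := by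
  obtain ⟨ht₀, ht⟩ := ht
  have hdisj : Disjoint (Icc √(t / (1 - t)) √((1 - t) / t))
      (Icc (-√((1 - t) / t)) (-√(t / (1 - t)))) := by
    have : 0 < √(t / (1 - t)) := Real.sqrt_pos.mpr (div_pos ht₀ (by linarith))
    rw [Set.disjoint_left]
    intro u hu hu'
    linarith [hu.1, hu'.2]
  refine Measure.ext_of_lintegral _ fun G hG => ?_
  rw [lintegral_map hG measurable_accusationValue, columnMeasure, biasMeasure,
    lintegral_bind_dirac_prod_bern _ (F := fun q => G (accusationValue q))
      (hG.comp measurable_accusationValue),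
    lintegral_withDensity_eq_lintegral_mul _ (by fun_prop) (by fun_prop),
    lintegral_withDensity_eq_lintegral_mul _ (by fun_prop) (by fun_prop),
    lintegral_withDensity_eq_lintegral_mul _ (by fun_prop) hG,
    lintegral_union measurableSet_Icc hdisj]
  simp only [accusationValue, Pi.mul_apply, ← mul_assoc, if_true, Bool.false_eq_true, if_false]
  rw [lintegral_fT_mul_comp_g1T ht₀ ht, lintegral_fT_mul_one_sub_comp_g0T ht₀ ht]

theorem accusation_value_density_general
    (t : ℝ) (ht : t ∈ Set.Ioo (0:ℝ) (1/2))
    (U : ℝ × Bool → ℝ) (hU : ∀ q, U q = if q.2 then g1T q.1 else g0T q.1)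
    (T : Set ℝ)
    (hT : T = Set.Icc (Real.sqrt (t / (1-t))) (Real.sqrt ((1-t) / t)) ∪
        Set.Icc (-Real.sqrt ((1-t) / t)) (-Real.sqrt (t / (1-t))))
    (h : ℝ → ℝ) (hmeas : Measurable h) :
    ∫ q, h (U q) ∂(columnMeasure t)
      = ∫ u in T, h u * (2 / ((π - 4 * tprime t) * (1 + u ^ 2) ^ 2)) := by
  obtain rfl : U = accusationValue := funext hU
  subst hT
  rw [← integral_map measurable_accusationValue.aemeasurable hmeas.aestronglyMeasurable,
    map_accusationValue_columnMeasure ht, integral_withDensity_eq_integral_toReal_smul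
      (by fun_prop) (ae_of_all _ fun _ => ENNReal.ofReal_lt_top)]
  congr 1 with u
  rw [ENNReal.toReal_ofReal (accusationDensity_nonneg ht.2 u), smul_eq_mul, mul_comm,
    accusationDensity]

/-- the single-column accusation value `U = g1^T p` (if `X = 1`) or
`g0^T p` (if `X = 0`), where `p` has density `f^T` and `X` is Bernoulli(`p`) given `p`,
has probability density `φ(u) = 2/((π - 4t')·(1+u²)²)` on
`T = [√(t/(1-t)), √((1-t)/t)] ∪ [-√((1-t)/t), -√(t/(1-t))]` (and `0` outside `T`):
for every bounded measurable `h`, `E[h(U)] = ∫_T h(u)·φ(u) du`. -/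
theorem accusation_value_density
    (t : ℝ) (ht : t ∈ Set.Ioo (0:ℝ) (1/2))
    (U : ℝ × Bool → ℝ) (hU : ∀ q, U q = if q.2 then g1T q.1 else g0T q.1)
    (T : Set ℝ)
    (hT : T = Set.Icc (Real.sqrt (t / (1-t))) (Real.sqrt ((1-t) / t)) ∪
        Set.Icc (-Real.sqrt ((1-t) / t)) (-Real.sqrt (t / (1-t))))
    (h : ℝ → ℝ) (hmeas : Measurable h) (hbd : ∃ Cb, ∀ u, |h u| ≤ Cb) :
    ∫ q, h (U q) ∂(columnMeasure t)
      = ∫ u in T, h u * (2 / ((π - 4 * tprime t) * (1 + u ^ 2) ^ 2)) :=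
  accusation_value_density_general t ht U hU T hT h hmeas

end
end
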